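/- arXiv:1904.10680 — 8 statements merged into one kernel-verified Lean document; each statement's English description precedes it below -/
import Mathlib

section
/- Let (V, dist) be a finite metric space, C ⊆ V a set of clients, F ⊆ V a set of facilities with opening costs open : F → ℝ≥0. Let D ⊆ F be nonempty, K ⊆ C nonempty, and f ∈ F \ D. If dist(f, D) > (2/|K|) · (open(f) + Σ_{c∈K} dist(c,f)), then cost(D ∪ {f}) < cost(D), where cost(R) = Σ_{g∈R} open(g) + Σ_{c∈C} min_{g∈R} dist(c,g). -/
/-!
By the triangle inequality, opening `f` lowers the connection cost of each client `c ∈ K`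
by at least `dist(f, D) - 2 dist(c, f)`, and never raises that of any other client. Summed over
`K`, the saving is at least `|K| dist(f, D) - 2 ∑_{c ∈ K} dist(c, f)`, which the hypothesis makes
larger than `2 op f ≥ op f`, the price of opening `f`.
-/

open Finset Metric

section InfDist

variable {V : Type*} [PseudoMetricSpace V]

lemma infDist_insert_le {s : Set V} (hs : s.Nonempty) (x y : V) :
    infDist x (insert y s) ≤ infDist x s :=
  infDist_le_infDist_of_subset (Set.subset_insert y s) hs

lemma infDist_sub_two_mul_dist_le_infDist_sub_infDist_insert (s : Set V) (x y : V) :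
    infDist y s - 2 * dist x y ≤ infDist x s - infDist x (insert y s) := by
  have h_new : infDist x (insert y s) ≤ dist x y :=
    infDist_le_dist_of_mem (Set.mem_insert y s)
  have h_old : infDist y s ≤ infDist x s + dist x y := by
    simpa only [dist_comm] using infDist_le_infDist_add_dist (x := y) (y := x) (s := s)
  linarith

lemma card_mul_infDist_sub_le_sum_infDist_sub_infDist_insert {K C : Finset V} (hKC : K ⊆ C)
    {s : Set V} (hs : s.Nonempty) (y : V) :
    #K * infDist y s - 2 * ∑ c ∈ K, dist c y
      ≤ ∑ c ∈ C, (infDist c s - infDist c (insert y s)) := calc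
  #K * infDist y s - 2 * ∑ c ∈ K, dist c y = ∑ c ∈ K, (infDist y s - 2 * dist c y) := by
    rw [sum_sub_distrib, sum_const, nsmul_eq_mul, mul_sum]
  _ ≤ ∑ c ∈ K, (infDist c s - infDist c (insert y s)) :=
    sum_le_sum fun c _ ↦ infDist_sub_two_mul_dist_le_infDist_sub_infDist_insert s c y
  _ ≤ ∑ c ∈ C, (infDist c s - infDist c (insert y s)) :=
    sum_le_sum_of_subset_of_nonneg hKC fun c _ _ ↦ sub_nonneg.2 (infDist_insert_le hs c y)

end InfDist

theorem facility_far_improves_general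
    {V : Type*} [MetricSpace V] [DecidableEq V]
    (C F D K : Finset V) (op : V → ℝ)
    (hop : ∀ g ∈ F, 0 ≤ op g)
    (hD : D.Nonempty)
    (hKC : K ⊆ C) (hK : K.Nonempty)
    (f : V) (hfF : f ∈ F) (hfD : f ∉ D)
    (hfar : Metric.infDist f (D : Set V)
      > (2 / (K.card : ℝ)) * (op f + ∑ c ∈ K, dist c f)) :
    (∑ g ∈ insert f D, op g)
      + ∑ c ∈ C, Metric.infDist c ((insert f D : Finset V) : Set V)
    < (∑ g ∈ D, op g) + ∑ c ∈ C, Metric.infDist c (D : Set V) := by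
  have hK_pos : (0 : ℝ) < #K := by exact_mod_cast hK.card_pos
  have hfar' : 2 * (op f + ∑ c ∈ K, dist c f) < #K * infDist f (D : Set V) := by
    rw [gt_iff_lt, div_mul_eq_mul_div, div_lt_iff₀ hK_pos] at hfar
    linarith
  have h_saving := card_mul_infDist_sub_le_sum_infDist_sub_infDist_insert hKC
    (s := (D : Set V)) (by exact_mod_cast hD) f
  have h_op := hop f hfF
  rw [sum_insert hfD, coe_insert]
  rw [sum_sub_distrib] at h_saving
  linarith

/-- Key lemma (Lemma `close-opt-abs`): if a facility `f ∉ D` is far from `D` compared with the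
average (opening + connection-to-`f`) cost of a nonempty client set `K`, then opening `f`
strictly decreases the facility-location cost. -/
theorem facility_far_improves
    {V : Type*} [MetricSpace V] [DecidableEq V]
    (C F D K : Finset V) (op : V → ℝ)
    (hop : ∀ g ∈ F, 0 ≤ op g)
    (hDF : D ⊆ F) (hD : D.Nonempty)
    (hKC : K ⊆ C) (hK : K.Nonempty)
    (f : V) (hfF : f ∈ F) (hfD : f ∉ D)
    (hfar : Metric.infDist f (D : Set V)
      > (2 / (K.card : ℝ)) * (op f + ∑ c ∈ K, dist c f)) :
    (∑ g ∈ insert f D, op g)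
      + ∑ c ∈ C, Metric.infDist c ((insert f D : Finset V) : Set V)
    < (∑ g ∈ D, op g) + ∑ c ∈ C, Metric.infDist c (D : Set V) :=
  facility_far_improves_general C F D K op hop hD hKC hK f hfF hfD hfar
end

section
/- Let (V, dist) be a finite metric space with client set C, facility set F, opening costs open : F → ℝ≥0, and let ε > 0. Suppose D̃ ⊆ F is a solution such that for every f ∈ F, conn(D̃ ∪ {f}) + ε·open(D̃ ∪ {f}) ≥ conn(D̃) + ε·open(D̃) (local optimality under addition in the ε-scaled instance), where conn(R) = Σ_{c∈C} dist(c,R). Then for any subset of clients S ⊆ C and any solution D ⊆ F, conn(S, D̃) ≤ conn(S, D) + ε·open(D), where conn(S,R) = Σ_{c∈S} dist(c,R). -/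
/-!
Reassign every client of `S` to its nearest facility `f` of `D`. For a single `f`, local
optimality of `D̃` under adding `f` says that the total gain `Σ_c (dist(c, D̃) - dist(c, f))⁺`
over all clients is at most `ε·open(f)`; in particular this bounds the gain over the clients
of `S` assigned to `f`. Summing over `f ∈ D` gives the claim.
-/

open Finset Metric

lemma Finset.sum_insert_le_add {ι M : Type*} [DecidableEq ι] [AddCommMonoid M] [PartialOrder M]
    [IsOrderedAddMonoid M] {s : Finset ι} {a : ι} {f : ι → M} (ha : 0 ≤ f a) :
    ∑ x ∈ insert a s, f x ≤ f a + ∑ x ∈ s, f x := by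
  by_cases has : a ∈ s
  · rw [insert_eq_of_mem has]
    exact le_add_of_nonneg_left ha
  · rw [sum_insert has]

namespace Metric

variable {V : Type*} [MetricSpace V]

lemma posPart_infDist_sub_dist_le_infDist_sub_infDist_insert {s : Set V} (hs : s.Nonempty)
    (x y : V) : (infDist x s - dist x y)⁺ ≤ infDist x s - infDist x (insert y s) := by
  rw [posPart_def]
  refine sup_le ?_ ?_
  · have : infDist x (insert y s) ≤ dist x y := infDist_le_dist_of_mem (Set.mem_insert y s)
    linarith
  · have := infDist_le_infDist_of_subset (Set.subset_insert y s) hs (x := x)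
    linarith

lemma sum_le_sum_infDist_add_of_sum_posPart_le [DecidableEq V] {S D : Finset V}
    (hD : D.Nonempty) (a b : V → ℝ) (hgain : ∀ f ∈ D, ∑ c ∈ S, (a c - dist c f)⁺ ≤ b f) :
    ∑ c ∈ S, a c ≤ ∑ c ∈ S, infDist c (D : Set V) + ∑ f ∈ D, b f := by
  have hnearest (c : V) : ∃ f ∈ D, infDist c (D : Set V) = dist c f := by
    obtain ⟨f, hf, hcf⟩ :=
      D.finite_toSet.isCompact.exists_infDist_eq_dist (coe_nonempty.mpr hD) c
    exact ⟨f, mem_coe.mp hf, hcf⟩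
  choose σ hσD hσ using hnearest
  have hfiber (f : V) (hf : f ∈ D) :
      ∑ c ∈ S with σ c = f, (a c - infDist c (D : Set V)) ≤ b f := by
    calc ∑ c ∈ S with σ c = f, (a c - infDist c (D : Set V))
        ≤ ∑ c ∈ S with σ c = f, (a c - dist c f)⁺ := by
          refine sum_le_sum fun c hc ↦ ?_
          rw [hσ c, (mem_filter.mp hc).2]
          exact le_posPart _
      _ ≤ ∑ c ∈ S, (a c - dist c f)⁺ :=
          sum_le_sum_of_subset_of_nonneg (filter_subset _ S) fun _ _ _ ↦ posPart_nonneg _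
      _ ≤ b f := hgain f hf
  have hsum : ∑ c ∈ S, (a c - infDist c (D : Set V)) ≤ ∑ f ∈ D, b f := by
    rw [← sum_fiberwise_of_maps_to fun c _ ↦ hσD c]
    exact sum_le_sum hfiber
  rw [sum_sub_distrib] at hsum
  linarith

end Metric

theorem reconnect_lemma_general
    {V : Type*} [MetricSpace V] [DecidableEq V]
    (C F : Finset V) (op : V → ℝ) (hop : ∀ g ∈ F, 0 ≤ op g)
    (ε : ℝ) (hε : 0 < ε)
    (Dt : Finset V) (hDt : Dt.Nonempty)
    (hlocal : ∀ f ∈ F,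
      (∑ c ∈ C, Metric.infDist c (Dt : Set V)) + ε * ∑ g ∈ Dt, op g
        ≤ (∑ c ∈ C, Metric.infDist c ((insert f Dt : Finset V) : Set V))
          + ε * ∑ g ∈ insert f Dt, op g)
    (S : Finset V) (hS : S ⊆ C)
    (D : Finset V) (hDF : D ⊆ F) (hD : D.Nonempty) :
    ∑ c ∈ S, Metric.infDist c (Dt : Set V)
      ≤ (∑ c ∈ S, Metric.infDist c (D : Set V)) + ε * ∑ g ∈ D, op g := by
  rw [mul_sum]
  refine sum_le_sum_infDist_add_of_sum_posPart_le hD _ _ fun f hf ↦ ?_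
  have hopen : ε * ∑ g ∈ insert f Dt, op g ≤ ε * op f + ε * ∑ g ∈ Dt, op g := by
    rw [← mul_add]
    exact mul_le_mul_of_nonneg_left (sum_insert_le_add (hop f (hDF hf))) hε.le
  calc ∑ c ∈ S, (infDist c (Dt : Set V) - dist c f)⁺
      ≤ ∑ c ∈ C, (infDist c (Dt : Set V) - dist c f)⁺ :=
        sum_le_sum_of_subset_of_nonneg hS fun _ _ _ ↦ posPart_nonneg _
    _ ≤ ∑ c ∈ C, (infDist c (Dt : Set V) - infDist c ((insert f Dt : Finset V) : Set V)) := by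
        refine sum_le_sum fun c _ ↦ ?_
        rw [coe_insert]
        exact posPart_infDist_sub_dist_le_infDist_sub_infDist_insert (coe_nonempty.mpr hDt) c f
    _ ≤ ε * op f := by
        have := hlocal f (hDF hf)
        rw [sum_sub_distrib]
        linarith

/-- Lemma (reconnect): if `D̃` is locally optimal under facility additions in the ε-scaled
instance, then for every client subset `S` and every solution `D`,
`conn(S, D̃) ≤ conn(S, D) + ε·open(D)`. -/
theorem reconnect_lemma
    {V : Type*} [MetricSpace V] [DecidableEq V]
    (C F : Finset V) (op : V → ℝ) (hop : ∀ g ∈ F, 0 ≤ op g)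
    (ε : ℝ) (hε : 0 < ε)
    (Dt : Finset V) (hDtF : Dt ⊆ F) (hDt : Dt.Nonempty)
    (hlocal : ∀ f ∈ F,
      (∑ c ∈ C, Metric.infDist c (Dt : Set V)) + ε * ∑ g ∈ Dt, op g
        ≤ (∑ c ∈ C, Metric.infDist c ((insert f Dt : Finset V) : Set V))
          + ε * ∑ g ∈ insert f Dt, op g)
    (S : Finset V) (hS : S ⊆ C)
    (D : Finset V) (hDF : D ⊆ F) (hD : D.Nonempty) :
    ∑ c ∈ S, Metric.infDist c (Dt : Set V)
      ≤ (∑ c ∈ S, Metric.infDist c (D : Set V)) + ε * ∑ g ∈ D, op g :=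
  reconnect_lemma_general C F op hop ε hε Dt hDt hlocal S hS D hDF hD
end

section
/- Let (V, dist) be a finite metric space with clients C, facilities F with opening costs, and let D̃ ⊆ F be a nonempty solution in which every facility serves at least one client, and which is locally optimal under additions for the ε-scaled opening costs. Let D be an optimum solution of the original instance. Then for every f ∈ D̃ there exists g ∈ D with dist(f, g) ≤ 2·avgcost(f), where avgcost(f) = (open(f) + Σ_{c∈cluster(f)} dist(c,f)) / |cluster(f)| and cluster(f) is the set of clients of C whose closest facility in D̃ is f (ties broken so that clusters partition C and each is nonempty). -/
/-!
Compare the optimum `D` with `D ∪ {f}`: the latter pays `open(f)` once more but brings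
every client `c` of `cluster(f)` from distance at least `dist(f, D) - dist(c, f)` down to
`dist(c, f)`. Optimality of `D` therefore gives
`|cluster(f)| · dist(f, D) ≤ open(f) + 2 Σ_{c ∈ cluster(f)} dist(c, f)`.
-/

open Finset Metric

theorem Finset.sum_insert_le_add_of_nonneg {ι β : Type*} [DecidableEq ι] [AddCommMonoid β]
    [PartialOrder β] [IsOrderedAddMonoid β] (s : Finset ι) (g : ι → β) {i : ι} (hi : 0 ≤ g i) :
    ∑ j ∈ insert i s, g j ≤ g i + ∑ j ∈ s, g j := by
  by_cases his : i ∈ s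
  · rw [insert_eq_of_mem his]
    exact le_add_of_nonneg_left hi
  · rw [sum_insert his]

section

variable {V : Type*} [MetricSpace V]

theorem card_mul_infDist_sub_sum_dist_le_sum_infDist (S : Finset V) (s : Set V) (f : V) :
    (#S : ℝ) * infDist f s - ∑ c ∈ S, dist c f ≤ ∑ c ∈ S, infDist c s := by
  have hpoint : ∀ c ∈ S, infDist f s - dist c f ≤ infDist c s := fun c _ => by
    linarith [infDist_le_infDist_add_dist (x := f) (y := c) (s := s), dist_comm f c]
  simpa only [sum_sub_distrib, sum_const, nsmul_eq_mul] using sum_le_sum hpoint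

theorem sum_infDist_insert_le [DecidableEq V] {C S D : Finset V} (hS : S ⊆ C)
    (hD : D.Nonempty) (f : V) :
    ∑ c ∈ C, infDist c ((insert f D : Finset V) : Set V)
      ≤ ∑ c ∈ C \ S, infDist c (D : Set V) + ∑ c ∈ S, dist c f := by
  rw [← sum_sdiff hS]
  gcongr with c _ c _
  · exact infDist_le_infDist_of_subset (by simp) (by exact_mod_cast hD)
  · exact infDist_le_dist_of_mem (by simp)

theorem card_mul_infDist_le_of_insert_not_cheaper [DecidableEq V] {C S D : Finset V}
    (hS : S ⊆ C) (hD : D.Nonempty) (op : V → ℝ) {f : V} (hf : 0 ≤ op f)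
    (hcost : (∑ g ∈ D, op g) + ∑ c ∈ C, infDist c (D : Set V)
      ≤ (∑ g ∈ insert f D, op g) + ∑ c ∈ C, infDist c ((insert f D : Finset V) : Set V)) :
    (#S : ℝ) * infDist f (D : Set V) ≤ op f + 2 * ∑ c ∈ S, dist c f := by
  have hsplit := sum_sdiff (f := fun c => infDist c (D : Set V)) hS
  linarith [card_mul_infDist_sub_sum_dist_le_sum_infDist S (D : Set V) f,
    sum_infDist_insert_le hS hD f, sum_insert_le_add_of_nonneg D op hf]

end

theorem close_opt_general
    {V : Type*} [MetricSpace V]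
    (C F : Finset V) (op : V → ℝ) (hop : ∀ g ∈ F, 0 ≤ op g)
    (Dt : Finset V) (hDtF : Dt ⊆ F)
    (cl : V → Finset V)
    (hclC : ∀ f ∈ Dt, cl f ⊆ C)
    (hclne : ∀ f ∈ Dt, (cl f).Nonempty)
    (D : Finset V) (hDF : D ⊆ F) (hD : D.Nonempty)
    (hopt : ∀ R ⊆ F, R.Nonempty →
      (∑ g ∈ D, op g) + ∑ c ∈ C, Metric.infDist c (D : Set V)
        ≤ (∑ g ∈ R, op g) + ∑ c ∈ C, Metric.infDist c (R : Set V)) :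
    ∀ f ∈ Dt, ∃ g ∈ D,
      dist f g ≤ 2 * ((op f + ∑ c ∈ cl f, dist c f) / ((cl f).card : ℝ)) := by
  classical
  intro f hf
  obtain ⟨g, hg, hfg⟩ := D.finite_toSet.isCompact.exists_infDist_eq_dist (by exact_mod_cast hD) f
  refine ⟨g, hg, ?_⟩
  have hopf : 0 ≤ op f := hop f (hDtF hf)
  have hcard : (0 : ℝ) < #(cl f) := by exact_mod_cast (hclne f hf).card_pos
  have hbound := card_mul_infDist_le_of_insert_not_cheaper (hclC f hf) hD op hopf
    (hopt _ (insert_subset (hDtF hf) hDF) (insert_nonempty f D))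
  rw [← hfg, mul_div_assoc', le_div_iff₀ hcard]
  linarith

/-- Corollary (`close-opt`): for every facility `f` of the robust approximate solution `D̃`
there is a facility `g` of the optimum solution `D` with `dist(f,g) ≤ 2·avgcost(f)`. -/
theorem close_opt
    {V : Type*} [MetricSpace V] [DecidableEq V]
    (C F : Finset V) (op : V → ℝ) (hop : ∀ g ∈ F, 0 ≤ op g)
    (ε : ℝ) (hε : 0 < ε)
    (Dt : Finset V) (hDtF : Dt ⊆ F) (hDtne : Dt.Nonempty)
    (cl : V → Finset V)
    (hclC : ∀ f ∈ Dt, cl f ⊆ C)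
    (hclne : ∀ f ∈ Dt, (cl f).Nonempty)
    (hclmin : ∀ f ∈ Dt, ∀ c ∈ cl f, dist c f = Metric.infDist c (Dt : Set V))
    (hpart : ∀ c ∈ C, ∃! f, f ∈ Dt ∧ c ∈ cl f)
    (hlocal : ∀ f ∈ F,
      (∑ c ∈ C, Metric.infDist c (Dt : Set V)) + ε * ∑ g ∈ Dt, op g
        ≤ (∑ c ∈ C, Metric.infDist c ((insert f Dt : Finset V) : Set V))
          + ε * ∑ g ∈ insert f Dt, op g)
    (D : Finset V) (hDF : D ⊆ F) (hD : D.Nonempty)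
    (hopt : ∀ R ⊆ F, R.Nonempty →
      (∑ g ∈ D, op g) + ∑ c ∈ C, Metric.infDist c (D : Set V)
        ≤ (∑ g ∈ R, op g) + ∑ c ∈ C, Metric.infDist c (R : Set V)) :
    ∀ f ∈ Dt, ∃ g ∈ D,
      dist f g ≤ 2 * ((op f + ∑ c ∈ cl f, dist c f) / ((cl f).card : ℝ)) :=
  close_opt_general C F op hop Dt hDtF cl hclC hclne D hDF hD hopt
end

section
/- Let (V, dist) be a finite metric space with clients C, facilities F, opening costs open, and a nonempty set D° ⊆ F together with a partition of C into nonempty clusters (cluster(f))_{f ∈ D°} such that for every f ∈ D° and c ∈ cluster(f): 1 ≤ dist(c,f) ≤ r, and open(f) + Σ_{c∈cluster(f)} dist(c,f) ≤ |cluster(f)|·r, for some real r > 1. Let D be an optimum facility location solution. Then for every client c ∈ C there exists g ∈ D with dist(c,g) ≤ 3r. -/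
/-!
If every facility of `D` were farther than `3r` from a client `c` in the cluster of `f`, then every
client of that cluster, being within `2r` of `c`, would be farther than `r` from `D`. Opening `f`
in addition to `D` would then cost at most `|cluster f| · r` and save more than that in connection
costs, contradicting the optimality of `D`.
-/

open Finset Metric

section

variable {V : Type*} [MetricSpace V]

noncomputable def facilityCost (C : Finset V) (op : V → ℝ) (R : Finset V) : ℝ :=
  ∑ g ∈ R, op g + ∑ c ∈ C, infDist c (R : Set V)

lemma facilityCost_insert_lt [DecidableEq V] {C A D : Finset V} (op : V → ℝ) {f : V}
    (hf : f ∉ D) (hD : D.Nonempty) (hAC : A ⊆ C)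
    (hgain : op f + ∑ c ∈ A, dist c f < ∑ c ∈ A, infDist c (D : Set V)) :
    facilityCost C op (insert f D) < facilityCost C op D := by
  have hfar : ∑ c ∈ C \ A, infDist c ((insert f D : Finset V) : Set V)
      ≤ ∑ c ∈ C \ A, infDist c (D : Set V) :=
    sum_le_sum fun c _ => infDist_le_infDist_of_subset (by simp) (coe_nonempty.2 hD)
  have hnear : ∑ c ∈ A, infDist c ((insert f D : Finset V) : Set V) ≤ ∑ c ∈ A, dist c f :=
    sum_le_sum fun c _ => infDist_le_dist_of_mem (by simp)
  unfold facilityCost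
  rw [sum_insert hf, ← sum_sdiff hAC, ← sum_sdiff hAC (f := fun c => infDist c (D : Set V))]
  linarith

end

theorem close_openfac_general
    {V : Type*} [MetricSpace V]
    (C F : Finset V) (op : V → ℝ)
    (r : ℝ)
    (D0 : Finset V) (hD0F : D0 ⊆ F)
    (cl : V → Finset V)
    (hclC : ∀ f ∈ D0, cl f ⊆ C)
    (hclne : ∀ f ∈ D0, (cl f).Nonempty)
    (hpart : ∀ c ∈ C, ∃! f, f ∈ D0 ∧ c ∈ cl f)
    (hrad : ∀ f ∈ D0, ∀ c ∈ cl f, 1 ≤ dist c f ∧ dist c f ≤ r)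
    (havg : ∀ f ∈ D0, op f + ∑ c ∈ cl f, dist c f ≤ ((cl f).card : ℝ) * r)
    (D : Finset V) (hDF : D ⊆ F) (hD : D.Nonempty)
    (hopt : ∀ R ⊆ F, R.Nonempty →
      (∑ g ∈ D, op g) + ∑ c ∈ C, Metric.infDist c (D : Set V)
        ≤ (∑ g ∈ R, op g) + ∑ c ∈ C, Metric.infDist c (R : Set V)) :
    ∀ c ∈ C, ∃ g ∈ D, dist c g ≤ 3 * r := by
  classical
  intro c hc
  obtain ⟨f, ⟨hf, hcf⟩, -⟩ := hpart c hc
  obtain ⟨g, hg, hcg⟩ := D.finite_toSet.isCompact.exists_infDist_eq_dist (coe_nonempty.2 hD) c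
  refine ⟨g, hg, hcg ▸ ?_⟩
  by_contra! hfar
  have hcf_le := (hrad f hf c hcf).2
  have hfD : f ∉ D := fun hfD => by
    have := infDist_le_dist_of_mem (x := c) (mem_coe.2 hfD)
    linarith [dist_nonneg (x := c) (y := f)]
  have hcluster_far : ∀ c' ∈ cl f, r < infDist c' (D : Set V) := fun c' hc' => by
    have := infDist_le_infDist_add_dist (s := (D : Set V)) (x := c) (y := c')
    linarith [dist_triangle_right c c' f, (hrad f hf c' hc').2]
  have hgain : op f + ∑ c' ∈ cl f, dist c' f < ∑ c' ∈ cl f, infDist c' (D : Set V) :=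
    calc op f + ∑ c' ∈ cl f, dist c' f ≤ #(cl f) * r := havg f hf
      _ = ∑ _c' ∈ cl f, r := by rw [sum_const, nsmul_eq_mul]
      _ < ∑ c' ∈ cl f, infDist c' (D : Set V) :=
        sum_lt_sum_of_nonempty (hclne f hf) hcluster_far
  exact (facilityCost_insert_lt op hfD hD (hclC f hf) hgain).not_ge
    (hopt _ (insert_subset (hD0F hf) hDF) (insert_nonempty f D))

/-- Lemma (`close-openfac`): under the structured-cluster assumptions, every client is
within distance `3r` of some facility of an optimum solution `D`. -/
theorem close_openfac
    {V : Type*} [MetricSpace V]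
    (C F : Finset V) (op : V → ℝ) (hop : ∀ g ∈ F, 0 ≤ op g)
    (r : ℝ) (hr : 1 < r)
    (D0 : Finset V) (hD0F : D0 ⊆ F) (hD0ne : D0.Nonempty)
    (cl : V → Finset V)
    (hclC : ∀ f ∈ D0, cl f ⊆ C)
    (hclne : ∀ f ∈ D0, (cl f).Nonempty)
    (hpart : ∀ c ∈ C, ∃! f, f ∈ D0 ∧ c ∈ cl f)
    (hrad : ∀ f ∈ D0, ∀ c ∈ cl f, 1 ≤ dist c f ∧ dist c f ≤ r)
    (havg : ∀ f ∈ D0, op f + ∑ c ∈ cl f, dist c f ≤ ((cl f).card : ℝ) * r)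
    (D : Finset V) (hDF : D ⊆ F) (hD : D.Nonempty)
    (hopt : ∀ R ⊆ F, R.Nonempty →
      (∑ g ∈ D, op g) + ∑ c ∈ C, Metric.infDist c (D : Set V)
        ≤ (∑ g ∈ R, op g) + ∑ c ∈ C, Metric.infDist c (R : Set V)) :
    ∀ c ∈ C, ∃ g ∈ D, dist c g ≤ 3 * r :=
  close_openfac_general C F op r D0 hD0F cl hclC hclne hpart hrad havg D hDF hD hopt
end

section
/- Let P be a finite sequence of points π₀, π₁, …, π_p in a metric space with dist(π_i, π_{i+1}) < 2d for all i, where d > 0. Then the number of functions f : {π₀,…,π_p} → d·ℤ ∩ [α, β] satisfying |f(π_i) − f(π_{i+1})| ≤ dist(π_i, π_{i+1}) + d for all i is at most ((β−α)/d + 1) · 5^p. -/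
open Metric

/-- The set of `d`-discrete, `[α,β]`-bounded functions along a chain of portals that are
Lipschitz with slack `d`. -/
def slackFunctions {V : Type*} [MetricSpace V] (p : ℕ) (π : Fin (p + 1) → V)
    (d α β : ℝ) : Set (Fin (p + 1) → ℝ) :=
  {f | (∀ i, ∃ k : ℤ, f i = d * k) ∧ (∀ i, α ≤ f i ∧ f i ≤ β) ∧
    ∀ i : Fin p, |f i.castSucc - f i.succ| ≤ dist (π i.castSucc) (π i.succ) + d}

/-!
Writing `f = d * k` with `k` integer-valued, a slack function is determined by its initial
value `k 0`, one of at most `(β - α)/d + 1` integers, and its increments `k (i+1) - k i`,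
each of which lies in `{-2, …, 2}` because `|f (i+1) - f i| < 3d`.
-/

open Finset

section Paths

variable {G : Type*} [AddGroup G] {p : ℕ}

def pathsWithSteps (s t : Finset G) : Set (Fin (p + 1) → G) :=
  {k | k 0 ∈ s ∧ ∀ i : Fin p, k i.succ - k i.castSucc ∈ t}

theorem eq_of_apply_zero_eq_of_forall_sub_eq {k l : Fin (p + 1) → G} (h0 : k 0 = l 0)
    (hstep : ∀ i : Fin p, k i.succ - k i.castSucc = l i.succ - l i.castSucc) : k = l := by
  funext i
  induction i using Fin.induction with
  | zero => exact h0
  | succ j ih => exact sub_left_inj.mp (ih ▸ hstep j)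

theorem finite_pathsWithSteps_and_ncard_le [DecidableEq G] (s t : Finset G) :
    (pathsWithSteps (p := p) s t).Finite ∧
      (pathsWithSteps (p := p) s t).ncard ≤ #s * #t ^ p := by
  let encode : (Fin (p + 1) → G) → G × (Fin p → G) :=
    fun k => (k 0, fun i => k i.succ - k i.castSucc)
  let box : Finset (G × (Fin p → G)) := s ×ˢ Fintype.piFinset fun _ => t
  have hmaps : Set.MapsTo encode (pathsWithSteps s t) box := by
    rintro k ⟨hk0, hkt⟩
    simpa [encode, box] using ⟨hk0, hkt⟩
  have hinj : Set.InjOn encode (pathsWithSteps s t) := fun k _ l _ hkl =>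
    eq_of_apply_zero_eq_of_forall_sub_eq (congrArg Prod.fst hkl)
      (congrFun (congrArg Prod.snd hkl))
  refine ⟨.of_injOn hmaps hinj box.finite_toSet, ?_⟩
  calc _ ≤ (box : Set _).ncard := Set.ncard_le_ncard_of_injOn encode (fun _ hk => hmaps hk) hinj
    _ = #s * #t ^ p := by
        rw [Set.ncard_coe_finset, card_product, Fintype.card_piFinset_const]

end Paths

section Lattice

variable {K : Type*} [Field K] [LinearOrder K] [IsStrictOrderedRing K] {d : K}

theorem abs_sub_lt_of_abs_mul_sub_lt (hd : 0 < d) {m n N : ℤ}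
    (h : |d * m - d * n| < d * N) : |m - n| < N := by
  rw [← mul_sub, abs_mul, abs_of_pos hd] at h
  exact_mod_cast lt_of_mul_lt_mul_left h hd.le

variable [FloorRing K]

theorem mem_Icc_ceil_floor_of_le_mul_le (hd : 0 < d) {a b : K} {k : ℤ}
    (ha : a ≤ d * k) (hb : d * k ≤ b) : k ∈ Icc ⌈a / d⌉ ⌊b / d⌋ := by
  rw [mem_Icc, Int.ceil_le, Int.le_floor, div_le_iff₀' hd, le_div_iff₀' hd]
  exact ⟨ha, hb⟩

theorem card_Icc_ceil_floor_le {a b : K} (hab : a ≤ b + 1) :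
    (#(Icc ⌈a⌉ ⌊b⌋) : K) ≤ b - a + 1 := by
  rw [Int.card_Icc, ← Int.cast_natCast, Int.toNat_eq_max, Int.cast_max, Int.cast_zero, max_le_iff]
  push_cast
  exact ⟨by linarith [Int.floor_le b, Int.le_ceil a], by linarith⟩

end Lattice

theorem slackFunctions_subset_image_pathsWithSteps {V : Type*} [MetricSpace V] {p : ℕ}
    {π : Fin (p + 1) → V} {d α β : ℝ} (hd : 0 < d)
    (hcons : ∀ i : Fin p, dist (π i.castSucc) (π i.succ) < 2 * d) :
    slackFunctions p π d α β ⊆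
      (fun k i => d * k i) '' pathsWithSteps (Icc ⌈α / d⌉ ⌊β / d⌋) (Icc (-2) 2) := by
  rintro f ⟨hdiscrete, hbounded, hlip⟩
  choose k hk using hdiscrete
  refine ⟨k, ⟨?_, fun i => ?_⟩, funext fun i => (hk i).symm⟩
  · obtain ⟨hα, hβ⟩ := hbounded 0
    rw [hk 0] at hα hβ
    exact mem_Icc_ceil_floor_of_le_mul_le hd hα hβ
  · have hstep : |d * k i.castSucc - d * k i.succ| < d * (3 : ℤ) := by
      rw [← hk, ← hk]
      push_cast
      linarith [hlip i, hcons i]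
    have hk_step := abs_lt.mp (abs_sub_lt_of_abs_mul_sub_lt hd hstep)
    rw [mem_Icc]
    omega

/-- Counting discrete Lipschitz-with-slack functions on a portal chain with consecutive
distances `< 2d`: there are at most `((β−α)/d + 1)·5^p` of them. -/
theorem count_slack_functions
    {V : Type*} [MetricSpace V] (p : ℕ) (π : Fin (p + 1) → V)
    (d α β : ℝ) (hd : 0 < d) (hαβ : α ≤ β)
    (hcons : ∀ i : Fin p, dist (π i.castSucc) (π i.succ) < 2 * d) :
    (slackFunctions p π d α β).Finite ∧
      ((slackFunctions p π d α β).ncard : ℝ) ≤ ((β - α) / d + 1) * 5 ^ p := by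
  obtain ⟨hPfin, hPcard⟩ :=
    finite_pathsWithSteps_and_ncard_le (p := p) (Icc ⌈α / d⌉ ⌊β / d⌋) (Icc (-2) 2)
  have hsub := slackFunctions_subset_image_pathsWithSteps (α := α) (β := β) hd hcons
  refine ⟨(hPfin.image _).subset hsub, ?_⟩
  calc ((slackFunctions p π d α β).ncard : ℝ)
      ≤ (#(Icc ⌈α / d⌉ ⌊β / d⌋) * #(Icc (-2 : ℤ) 2) ^ p : ℕ) := by
        exact_mod_cast ((Set.ncard_le_ncard hsub (hPfin.image _)).trans
          (Set.ncard_image_le hPfin)).trans hPcard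
    _ ≤ ((β - α) / d + 1) * 5 ^ p := by
        push_cast
        gcongr
        · rw [sub_div]
          exact card_Icc_ceil_floor_le (by linarith [div_le_div_of_nonneg_right hαβ hd.le])
        · norm_num [Int.card_Icc]
end

section
/- Let T* be a finite tree in which every node has degree at most 3. Let X be a connected subset of nodes of T* with |X| ≥ 2 such that at most 3 edges leave X (i.e., |∂X| ≤ 3). Then X admits a partition into at most 7 nonempty connected subsets X₁,…,X_k, each with |X_i| ≤ |X|/2 and with at most 3 edges of T* leaving each X_i. -/
/-!
Weight each node of `X` by the number of boundary edges of `X` at it. A weighted centroid `s`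
of `X` leaves at most one boundary edge of `X` in each component of `X - s`; since a forest has at
most one edge between `s` and a connected set, each such component has at most two boundary
edges. So `{s}` and the (at most three) components of `X - s` are blocks. At most one of them,
`B`, can exceed `|X|/2`; it is replaced by `{c}` and the (at most three) components of `B - c`
for an ordinary centroid `c` of `B`, each with at most `1 + |∂B| ≤ 3` boundary edges. This gives
at most `1 + 2 + 1 + 3 = 7` blocks.
-/

open Finset

namespace Finpartition

variable {α : Type*} [DecidableEq α] {s a b : Finset α}

def replacePart (P : Finpartition s) (hb : b ∈ P.parts) (Q : Finpartition b) : Finpartition s where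
  parts := P.parts.erase b ∪ Q.parts
  supIndep := by
    rw [supIndep_iff_pairwiseDisjoint, coe_union]
    refine (P.disjoint.subset (coe_subset.2 (erase_subset ..))).union Q.disjoint
      fun i hi j hj _ => ?_
    exact (P.disjoint (mem_of_mem_erase hi) hb (ne_of_mem_erase hi)).mono_right (Q.le hj)
  sup_parts := by
    have h := P.sup_parts
    rw [← insert_erase hb, sup_insert] at h
    rwa [sup_union, Q.sup_parts, sup_comm]
  bot_notMem h := (mem_union.1 h).elim (fun h => P.bot_notMem (mem_of_mem_erase h)) Q.bot_notMem

lemma card_replacePart_le (P : Finpartition s) (hb : b ∈ P.parts) (Q : Finpartition b) :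
    #(P.replacePart hb Q).parts + 1 ≤ #P.parts + #Q.parts := by
  have := card_union_le (P.parts.erase b) Q.parts
  have := card_erase_add_one hb
  simp only [replacePart]
  omega

lemma two_mul_card_lt_of_lt_two_mul_card (P : Finpartition s) (ha : a ∈ P.parts)
    (hb : b ∈ P.parts) (hab : a ≠ b) (hbig : #s < 2 * #b) : 2 * #a < #s := by
  have hcard : #(a ∪ b) = #a + #b := card_union_of_disjoint (P.disjoint ha hb hab)
  have := card_le_card (union_subset (P.le ha) (P.le hb))
  omega

end Finpartition

namespace SimpleGraph

variable {V : Type*} {G : SimpleGraph V} {s t : Set V} {u v x y : V}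

def restrict (G : SimpleGraph V) (s : Set V) : SimpleGraph V := (G.induce s).spanningCoe

@[simp] lemma restrict_adj : (G.restrict s).Adj u v ↔ G.Adj u v ∧ u ∈ s ∧ v ∈ s := by
  simp [restrict]

lemma restrict_le : G.restrict s ≤ G := fun _ _ h => (restrict_adj.1 h).1

lemma restrict_mono (h : s ⊆ t) : G.restrict s ≤ G.restrict t := fun _ _ hadj => by
  simp only [restrict_adj] at hadj ⊢
  exact ⟨hadj.1, h hadj.2.1, h hadj.2.2⟩

lemma restrict_le_deleteEdges {e : Sym2 V} (he : ∃ x ∈ e, x ∉ s) :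
    G.restrict s ≤ G.deleteEdges {e} := by
  intro a b hab
  rw [restrict_adj] at hab
  obtain ⟨x, hxe, hxs⟩ := he
  refine (deleteEdges_adj ..).2 ⟨hab.1, ?_⟩
  rintro rfl
  rcases Sym2.mem_iff.1 hxe with rfl | rfl
  exacts [hxs hab.2.1, hxs hab.2.2]

lemma Walk.mem_of_mem_support_restrict (p : (G.restrict s).Walk u v) (hu : u ∈ s)
    (hx : x ∈ p.support) : x ∈ s := by
  induction p with
  | nil => simp_all
  | cons h p ih =>
    rw [support_cons, List.mem_cons] at hx
    rcases hx with rfl | hx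
    exacts [hu, ih (restrict_adj.1 h).2.2 hx]

lemma induce_preconnected_iff :
    (G.induce s).Preconnected ↔ ∀ u ∈ s, ∀ v ∈ s, (G.restrict s).Reachable u v := by
  refine ⟨fun h u hu v hv => (h ⟨u, hu⟩ ⟨v, hv⟩).map (Embedding.spanningCoe _).toHom, ?_⟩
  rintro h ⟨u, hu⟩ ⟨v, hv⟩
  obtain ⟨p⟩ := h u hu v hv
  exact ⟨(p.mapLe restrict_le).induce s fun x hx =>
    p.mem_of_mem_support_restrict hu (by rwa [Walk.support_mapLe_eq_support] at hx)⟩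

lemma Walk.reachable_restrict (p : G.Walk u v) (hp : ∀ x ∈ p.support, x ∈ s) :
    (G.restrict s).Reachable u v := by
  induction p with
  | nil => rfl
  | cons h p ih =>
    simp only [Walk.support_cons, List.mem_cons, forall_eq_or_imp] at hp
    exact (restrict_adj.2 ⟨h, hp.1, hp.2 _ p.start_mem_support⟩).reachable.trans (ih hp.2)

lemma IsAcyclic.not_adj_of_reachable_restrict (hG : G.IsAcyclic)
    (h₁ : (G.restrict s).Reachable u x) (h₂ : (G.restrict t).Reachable x v)
    (hv : v ∉ s) (hu : u ∉ t) : ¬ G.Adj u v := fun huv =>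
  isBridge_iff.1 (isAcyclic_iff_forall_adj_isBridge.1 hG huv)
    ((h₁.mono (restrict_le_deleteEdges ⟨v, Sym2.mem_mk_right u v, hv⟩)).trans
      (h₂.mono (restrict_le_deleteEdges ⟨u, Sym2.mem_mk_left u v, hu⟩)))

lemma IsAcyclic.eq_of_adj_of_preconnected (hG : G.IsAcyclic) (hs : (G.induce s).Preconnected)
    (hv : v ∉ s) (hx : x ∈ s) (hy : y ∈ s) (hxv : G.Adj x v) (hyv : G.Adj y v) : x = y := by
  by_contra hxy
  refine hG.not_adj_of_reachable_restrict (s := s) (t := {y, v})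
    (induce_preconnected_iff.1 hs x hx y hy) ?_ hv ?_ hxv
  · exact (restrict_adj.2 ⟨hyv, by simp, by simp⟩).reachable
  · rintro (rfl | rfl)
    exacts [hxy rfl, hv hx]

variable [DecidableEq V]

noncomputable def componentFinpartition (G : SimpleGraph V) (A : Finset V) : Finpartition A := by
  classical exact Finpartition.ofSetSetoid (G.restrict A).reachableSetoid A

variable {A C D : Finset V}

lemma mem_component_iff (hC : C ∈ (G.componentFinpartition A).parts) (hu : u ∈ C) :
    v ∈ C ↔ v ∈ A ∧ (G.restrict A).Reachable u v := by
  classical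
  rw [← (G.componentFinpartition A).part_eq_of_mem hC hu, componentFinpartition,
    Finpartition.mem_part_ofSetSetoid_iff_rel]
  simp only [(G.componentFinpartition A).subset hC hu, true_and]
  rfl

lemma mem_component_of_adj (hC : C ∈ (G.componentFinpartition A).parts) (hx : x ∈ C) (hy : y ∈ A)
    (hxy : G.Adj x y) : y ∈ C :=
  (mem_component_iff hC hx).2
    ⟨hy, (restrict_adj.2 ⟨hxy, Finpartition.subset _ hC hx, hy⟩).reachable⟩

lemma reachable_restrict_of_mem_component (hC : C ∈ (G.componentFinpartition A).parts)
    (hu : u ∈ C) (hv : v ∈ C) : (G.restrict C).Reachable u v := by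
  obtain ⟨p⟩ := ((mem_component_iff hC hu).1 hv).2
  refine (p.mapLe restrict_le).reachable_restrict fun x hx => ?_
  rw [Walk.support_mapLe_eq_support] at hx
  exact (mem_component_iff hC hu).2
    ⟨p.mem_of_mem_support_restrict (Finpartition.subset _ hC hu) hx, ⟨p.takeUntil x hx⟩⟩

lemma induce_component_connected (hC : C ∈ (G.componentFinpartition A).parts) :
    (G.induce (C : Set V)).Connected := by
  obtain ⟨u, hu⟩ := Finpartition.nonempty_of_mem_parts _ hC
  have : Nonempty (C : Set V) := ⟨⟨u, hu⟩⟩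
  exact ⟨induce_preconnected_iff.2 fun _ hu _ hv => reachable_restrict_of_mem_component hC hu hv⟩

lemma exists_adj_of_mem_component_erase (hA : (G.induce (A : Set V)).Preconnected) (hv : v ∈ A)
    (hC : C ∈ (G.componentFinpartition (A.erase v)).parts) : ∃ y ∈ C, G.Adj v y := by
  obtain ⟨u, hu⟩ := Finpartition.nonempty_of_mem_parts _ hC
  have hCA : C ⊆ A.erase v := Finpartition.subset _ hC
  obtain ⟨p⟩ := induce_preconnected_iff.1 hA u (mem_of_mem_erase (hCA hu)) v hv
  obtain ⟨d, -, hd₁, hd₂⟩ := p.exists_boundary_dart C hu fun h => (notMem_erase v A) (hCA h)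
  obtain ⟨hadj, -, hd₂A⟩ := restrict_adj.1 d.adj
  obtain rfl : d.snd = v := by
    by_contra hne
    exact hd₂ (mem_component_of_adj hC hd₁ (mem_erase.2 ⟨hne, hd₂A⟩) hadj)
  exact ⟨d.fst, hd₁, hadj.symm⟩

lemma card_componentFinpartition_erase_le_degree [Fintype V] [DecidableRel G.Adj]
    (hA : (G.induce (A : Set V)).Preconnected) (hv : v ∈ A) :
    #(G.componentFinpartition (A.erase v)).parts ≤ G.degree v := by
  rw [← card_neighborFinset_eq_degree]
  refine card_le_card_of_forall_subsingleton (fun C y => y ∈ C) (fun C hC => ?_) fun y _ => ?_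
  · obtain ⟨y, hy, hvy⟩ := exists_adj_of_mem_component_erase hA hv hC
    exact ⟨y, (mem_neighborFinset ..).2 hvy, hy⟩
  · rintro C ⟨hC, hyC⟩ D ⟨hD, hyD⟩
    exact Finpartition.eq_of_mem_parts _ hC hD hyC hyD

variable {B E : Finset V} {c c' : V}

lemma disjoint_or_subset_erase_of_mem_component_erase (hG : G.IsAcyclic)
    (hB : (G.induce (B : Set V)).Preconnected) (hc : c ∈ B)
    (hD : D ∈ (G.componentFinpartition (B.erase c)).parts) (hc' : c' ∈ D) (hcc' : G.Adj c c')
    (hE : E ∈ (G.componentFinpartition (B.erase c')).parts) : Disjoint E D ∨ E ⊆ D.erase c' := by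
  have hDB : D ⊆ B.erase c := Finpartition.subset _ hD
  have hcc'ne : c ≠ c' := hcc'.ne
  by_cases hcE : c ∈ E
  · refine .inl (Finset.disjoint_left.2 fun x hxE hxD => ?_)
    exact hG.not_adj_of_reachable_restrict ((mem_component_iff hE hcE).1 hxE).2
      (reachable_restrict_of_mem_component hD hxD hc') (notMem_erase c' B)
      (fun h => notMem_erase c B (hDB h)) hcc'
  refine .inr fun x hxE => ?_
  have hxB : x ∈ B.erase c' := Finpartition.subset _ hE hxE
  refine mem_erase.2 ⟨ne_of_mem_erase hxB, ?_⟩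
  by_contra hxD
  -- otherwise `x` lies in another component of `B - c`, which reaches `c` avoiding `c'`
  have hxc : x ≠ c := fun h => hcE (h ▸ hxE)
  obtain ⟨D', hD', hxD'⟩ := (G.componentFinpartition (B.erase c)).exists_mem
    (mem_erase.2 ⟨hxc, mem_of_mem_erase hxB⟩)
  obtain ⟨y, hyD', hcy⟩ := exists_adj_of_mem_component_erase hB hc hD'
  have hD'B : D' ⊆ B.erase c' := fun z hz => by
    refine mem_erase.2 ⟨?_, mem_of_mem_erase (Finpartition.subset _ hD' hz)⟩
    rintro rfl
    exact hxD (Finpartition.eq_of_mem_parts _ hD' hD hz hc' ▸ hxD')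
  have hxc_reach : (G.restrict (B.erase c')).Reachable x c :=
    ((reachable_restrict_of_mem_component hD' hxD' hyD').mono (restrict_mono hD'B)).trans
      (restrict_adj.2 ⟨hcy.symm, hD'B hyD', mem_erase.2 ⟨hcc'ne, hc⟩⟩).reachable
  exact hcE ((mem_component_iff hE hxE).2 ⟨mem_erase.2 ⟨hcc'ne, hc⟩, hxc_reach⟩)

theorem exists_weighted_centroid (hG : G.IsAcyclic) (w : V → ℕ)
    (hB : (G.induce (B : Set V)).Preconnected) (hne : B.Nonempty) :
    ∃ c ∈ B, ∀ D ∈ (G.componentFinpartition (B.erase c)).parts,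
      2 * ∑ x ∈ D, w x ≤ ∑ x ∈ B, w x := by
  by_contra! hheavy
  -- Stepping from `c` to its neighbour in a heavy component `D` leaves a heavy component
  -- strictly inside `D`; induct on the size of the heavy component.
  obtain ⟨c, hc⟩ := hne
  obtain ⟨D, hD, hDw⟩ := hheavy c hc
  induction hn : #D using Nat.strong_induction_on generalizing c D with
  | _ n ih =>
  obtain ⟨c', hc'D, hcc'⟩ := exists_adj_of_mem_component_erase hB hc hD
  have hsubB : ∀ {c : V} {D : Finset V}, D ∈ (G.componentFinpartition (B.erase c)).parts →
      D ⊆ B := fun hD => (Finpartition.subset _ hD).trans (erase_subset ..)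
  obtain ⟨E, hE, hEw⟩ := hheavy c' (hsubB hD hc'D)
  rcases disjoint_or_subset_erase_of_mem_component_erase hG hB hc hD hc'D hcc' hE with hED | hED
  · have : ∑ x ∈ E, w x + ∑ x ∈ D, w x ≤ ∑ x ∈ B, w x := by
      rw [← sum_union hED]
      exact sum_le_sum_of_subset (union_subset (hsubB hE) (hsubB hD))
    omega
  · have : #E < n := hn ▸ (card_le_card hED).trans_lt (card_erase_lt_of_mem hc'D)
    exact ih _ this c' (hsubB hD hc'D) E hE hEw rfl

theorem exists_centroid (hG : G.IsAcyclic) (hB : (G.induce (B : Set V)).Preconnected)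
    (hne : B.Nonempty) :
    ∃ c ∈ B, ∀ D ∈ (G.componentFinpartition (B.erase c)).parts, 2 * #D ≤ #B := by
  simpa only [card_eq_sum_ones] using exists_weighted_centroid hG (fun _ => 1) hB hne

noncomputable def starFinpartition (G : SimpleGraph V) (hv : v ∈ A) : Finpartition A :=
  (G.componentFinpartition (A.erase v)).extend (b := {v}) (singleton_ne_empty v)
    (disjoint_singleton_right.2 (notMem_erase v A))
    (by rw [sup_eq_union, union_singleton, insert_erase hv])

lemma card_starFinpartition_le [Fintype V] [DecidableRel G.Adj]
    (hA : (G.induce (A : Set V)).Preconnected) (hv : v ∈ A) :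
    #(G.starFinpartition hv).parts ≤ G.degree v + 1 :=
  (card_insert_le _ _).trans (by grw [card_componentFinpartition_erase_le_degree hA hv])

section

variable [Fintype V] [DecidableRel G.Adj]

def edgeBoundary (G : SimpleGraph V) [DecidableRel G.Adj] (A : Finset V) : Finset (V × V) :=
  {e | G.Adj e.1 e.2 ∧ e.1 ∈ A ∧ e.2 ∉ A}

@[simp] lemma mem_edgeBoundary {e : V × V} :
    e ∈ G.edgeBoundary A ↔ G.Adj e.1 e.2 ∧ e.1 ∈ A ∧ e.2 ∉ A := by
  simp [edgeBoundary]

lemma ncard_setOf_eq_card_edgeBoundary :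
    {e : V × V | G.Adj e.1 e.2 ∧ e.1 ∈ A ∧ e.2 ∉ A}.ncard = #(G.edgeBoundary A) := by
  rw [← Set.ncard_coe_finset]
  congr
  ext
  simp

lemma card_edgeBoundary_singleton_le : #(G.edgeBoundary {v}) ≤ G.degree v := by
  rw [← card_neighborFinset_eq_degree]
  refine card_le_card_of_injOn Prod.snd (fun e he => ?_) fun e he f hf hef => ?_
  · obtain ⟨hadj, he1, -⟩ := mem_edgeBoundary.1 he
    rw [mem_singleton.1 he1] at hadj
    simpa using hadj
  · have he1 := (mem_edgeBoundary.1 he).2.1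
    have hf1 := (mem_edgeBoundary.1 hf).2.1
    rw [mem_singleton] at he1 hf1
    exact Prod.ext (he1.trans hf1.symm) hef

lemma card_edgeBoundary_component_erase_le (hG : G.IsAcyclic)
    (hC : C ∈ (G.componentFinpartition (A.erase v)).parts) :
    #(G.edgeBoundary C) ≤ #{e ∈ G.edgeBoundary A | e.1 ∈ C} + 1 := by
  have hCA : C ⊆ A.erase v := Finpartition.subset _ hC
  have htov : #{e ∈ G.edgeBoundary C | e.2 = v} ≤ 1 := by
    refine card_le_one.2 fun e he f hf => ?_
    simp only [mem_filter, mem_edgeBoundary] at he hf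
    have hvC : v ∉ C := fun h => notMem_erase v A (hCA h)
    refine Prod.ext (hG.eq_of_adj_of_preconnected (induce_component_connected hC).preconnected
      hvC he.1.2.1 hf.1.2.1 ?_ ?_) (he.2.trans hf.2.symm)
    exacts [he.2 ▸ he.1.1, hf.2 ▸ hf.1.1]
  calc #(G.edgeBoundary C)
      ≤ #({e ∈ G.edgeBoundary A | e.1 ∈ C} ∪ {e ∈ G.edgeBoundary C | e.2 = v}) :=
        card_le_card fun e he => ?_
    _ ≤ _ := (card_union_le _ _).trans (by grw [htov])
  obtain ⟨hadj, he1, he2⟩ := mem_edgeBoundary.1 he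
  by_cases hv : e.2 = v
  · exact mem_union_right _ (mem_filter.2 ⟨he, hv⟩)
  refine mem_union_left _ (mem_filter.2 ⟨mem_edgeBoundary.2 ⟨hadj, ?_, fun h2 => ?_⟩, he1⟩)
  · exact mem_of_mem_erase (hCA he1)
  · exact he2 (mem_component_of_adj hC he1 (mem_erase.2 ⟨hv, h2⟩) hadj)

variable {X Y : Finset V}

lemma exists_separator_edgeBoundary (hG : G.IsAcyclic) (hX : (G.induce (X : Set V)).Connected)
    (hbd : #(G.edgeBoundary X) ≤ 3) :
    ∃ s ∈ X, ∀ D ∈ (G.componentFinpartition (X.erase s)).parts,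
      #{e ∈ G.edgeBoundary X | e.1 ∈ D} ≤ 1 := by
  obtain ⟨⟨x, hx⟩⟩ := hX.nonempty
  obtain ⟨s, hs, hcent⟩ := exists_weighted_centroid hG
    (fun v => #{e ∈ G.edgeBoundary X | e.1 = v}) hX.preconnected ⟨x, hx⟩
  refine ⟨s, hs, fun D hD => ?_⟩
  have h := hcent D hD
  have hX : #{e ∈ G.edgeBoundary X | e.1 ∈ X} = #(G.edgeBoundary X) :=
    congrArg card (filter_true_of_mem fun e he => (mem_edgeBoundary.1 he).2.1)
  simp only [sum_card_fiberwise_eq_card_filter, hX] at h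
  omega

def IsBlock (G : SimpleGraph V) [DecidableRel G.Adj] (Y : Finset V) : Prop :=
  (G.induce (Y : Set V)).Connected ∧ #(G.edgeBoundary Y) ≤ 3

lemma isBlock_singleton (hv : G.degree v ≤ 3) : G.IsBlock {v} := by
  refine ⟨?_, card_edgeBoundary_singleton_le.trans hv⟩
  rw [coe_singleton]
  exact (connected_iff _).2 ⟨.of_subsingleton, ⟨⟨v, rfl⟩⟩⟩

lemma isBlock_of_mem_starFinpartition (hG : G.IsAcyclic) (hv3 : G.degree v ≤ 3) (hv : v ∈ A)
    (hsep : ∀ D ∈ (G.componentFinpartition (A.erase v)).parts,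
      #{e ∈ G.edgeBoundary A | e.1 ∈ D} ≤ 2)
    (hY : Y ∈ (G.starFinpartition hv).parts) : G.IsBlock Y := by
  rcases mem_insert.1 hY with rfl | hY
  · exact isBlock_singleton hv3
  · exact ⟨induce_component_connected hY,
      (card_edgeBoundary_component_erase_le hG hY).trans (by grw [hsep Y hY])⟩

theorem exists_finpartition_isBlock (hG : G.IsAcyclic) (hdeg : ∀ v, G.degree v ≤ 3)
    (hX : (G.induce (X : Set V)).Connected) (hbd : #(G.edgeBoundary X) ≤ 3) (hX2 : 2 ≤ #X) :
    ∃ P : Finpartition X, #P.parts ≤ 7 ∧ ∀ Y ∈ P.parts, G.IsBlock Y ∧ 2 * #Y ≤ #X := by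
  obtain ⟨s, hs, hsep⟩ := exists_separator_edgeBoundary hG hX hbd
  set S := G.starFinpartition hs
  have hS : ∀ Y ∈ S.parts, G.IsBlock Y := fun Y =>
    isBlock_of_mem_starFinpartition hG (hdeg s) hs fun D hD => (hsep D hD).trans one_le_two
  have hScard : #S.parts ≤ 4 :=
    (card_starFinpartition_le hX.preconnected hs).trans (by grw [hdeg s])
  by_cases hbig : ∃ B ∈ S.parts, #X < 2 * #B
  swap
  · push Not at hbig
    exact ⟨S, hScard.trans (by norm_num), fun Y hY => ⟨hS Y hY, hbig Y hY⟩⟩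
  obtain ⟨B, hB, hBbig⟩ := hbig
  have hBcomp : B ∈ (G.componentFinpartition (X.erase s)).parts := by
    refine (mem_insert.1 hB).resolve_left ?_
    rintro rfl
    simp at hBbig
    omega
  have hBconn := (induce_component_connected hBcomp).preconnected
  obtain ⟨c, hc, hcent⟩ := exists_centroid hG hBconn (Finpartition.nonempty_of_mem_parts _ hBcomp)
  have hBbd : #(G.edgeBoundary B) ≤ 2 :=
    (card_edgeBoundary_component_erase_le hG hBcomp).trans (by grw [hsep B hBcomp])
  refine ⟨S.replacePart hB (G.starFinpartition hc), ?_, fun Y hY => ?_⟩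
  · have := S.card_replacePart_le hB (G.starFinpartition hc)
    have := card_starFinpartition_le hBconn hc
    have := hdeg c
    omega
  rcases mem_union.1 hY with hY | hY
  · exact ⟨hS Y (mem_of_mem_erase hY), (S.two_mul_card_lt_of_lt_two_mul_card
      (mem_of_mem_erase hY) hB (ne_of_mem_erase hY) hBbig).le⟩
  refine ⟨isBlock_of_mem_starFinpartition hG (hdeg c) hc
    (fun _ _ => (card_le_card (filter_subset _ _)).trans hBbd) hY, ?_⟩
  rcases mem_insert.1 hY with rfl | hY
  · simpa using hX2
  · exact (hcent Y hY).trans (card_le_card (S.le hB))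

end

end SimpleGraph

open SimpleGraph in
/-- Claim (`block-partition`): in a finite tree of maximum degree 3, every connected node set
`X` with `|X| ≥ 2` and at most 3 boundary edges can be partitioned into at most 7 nonempty
connected pieces, each of size at most `|X|/2` and each with at most 3 boundary edges. -/
theorem block_partition
    {V : Type*} [Fintype V] [DecidableEq V]
    (G : SimpleGraph V) [DecidableRel G.Adj]
    (htree : G.IsTree) (hdeg : ∀ v : V, G.degree v ≤ 3)
    (X : Finset V) (hX2 : 2 ≤ X.card)
    (hconn : (G.induce (X : Set V)).Connected)
    (hbd : {e : V × V | G.Adj e.1 e.2 ∧ e.1 ∈ X ∧ e.2 ∉ X}.ncard ≤ 3) :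
    ∃ P : Finset (Finset V),
      P.card ≤ 7 ∧
      X = P.biUnion id ∧
      (∀ Y ∈ P, ∀ Z ∈ P, Y ≠ Z → Disjoint Y Z) ∧
      ∀ Y ∈ P, Y.Nonempty ∧ (G.induce (Y : Set V)).Connected ∧
        {e : V × V | G.Adj e.1 e.2 ∧ e.1 ∈ Y ∧ e.2 ∉ Y}.ncard ≤ 3 ∧
        (Y.card : ℝ) ≤ (X.card : ℝ) / 2 := by
  rw [ncard_setOf_eq_card_edgeBoundary] at hbd
  obtain ⟨P, hP, hblocks⟩ := exists_finpartition_isBlock htree.isAcyclic hdeg hconn hbd hX2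
  refine ⟨P.parts, hP, P.biUnion_parts.symm, fun Y hY Z hZ => P.disjoint hY hZ, fun Y hY => ?_⟩
  obtain ⟨⟨hYconn, hYbd⟩, hYX⟩ := hblocks Y hY
  refine ⟨P.nonempty_of_mem_parts hY, hYconn, ncard_setOf_eq_card_edgeBoundary.trans_le hYbd, ?_⟩
  have : (2 * #Y : ℝ) ≤ #X := by exact_mod_cast hYX
  linarith
end

section
/- Let (V,dist) be a finite metric space with clients C, facilities F, opening costs open, a finite portal set Π, a prediction function pred : Π → ℝ ∪ {+∞} and a request function req : Π → ℝ ∪ {+∞}. Define for a solution R ⊆ F and client c: conn_K(c,R) = min( min_{f∈R} dist(c,f), min_{π∈Π} (dist(c,π) + pred(π)) ), and say R is feasible if for every π with req(π) ≠ +∞ there is f ∈ R with dist(π,f) ≤ req(π). Suppose the portal set splits as Π together with child portal sets Π_{t'} for t' in a finite index set T', with request/prediction functions (req_{t'}, pred_{t'}), satisfying the compatibility conditions: (C1) for every π ∈ Π with req(π) ≠ +∞ there exist t' and ρ ∈ Π_{t'} with req_{t'}(ρ) + dist(π,ρ) ≤ req(π); (C2) for every t' and ρ ∈ Π_{t'}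 with pred_{t'}(ρ) ≠ +∞, either there is π ∈ Π with pred(π) + dist(π,ρ) ≤ pred_{t'}(ρ), or there are t'' and ρ' ∈ Π_{t''} with req_{t''}(ρ') + dist(ρ',ρ) ≤ pred_{t'}(ρ). If for every t' the set R_{t'} ⊆ F is a feasible solution to the child instance (with clients C_{t'}, portals Π_{t'}, functions req_{t'}, pred_{t'}), where (C_{t'})_{t'} partitions C, then R = ∪_{t'} R_{t'} is a feasible solution to the parent instance and cost(R; parent) ≤ Σ_{t'} cost(R_{t'}; child t'), where cost of a solution is open of the solution plus the sum of conn costs over its client set. -/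
open Finset Metric

/-- Connection cost of a client `c` in a generalized instance with facilities `R` and
portals `Ps` carrying predictions `pred` (values in `ℝ ∪ {+∞}` modelled by `EReal`). -/
noncomputable def connE {V : Type*} [MetricSpace V]
    (R Ps : Finset V) (pred : V → EReal) (c : V) : EReal :=
  sInf ((fun f => ((dist c f : ℝ) : EReal)) '' (R : Set V) ∪
    (fun π => ((dist c π : ℝ) : EReal) + pred π) '' (Ps : Set V))

/-- Cost of a solution `R` in a generalized instance. -/
noncomputable def costE {V : Type*} [MetricSpace V]
    (op : V → ℝ) (C R Ps : Finset V) (pred : V → EReal) : EReal :=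
  ((∑ f ∈ R, op f : ℝ) : EReal) + ∑ c ∈ C, connE R Ps pred c

/-- Feasibility: every portal with a finite request has an opened facility within the
requested distance. -/
def feasibleE {V : Type*} [MetricSpace V]
    (R Ps : Finset V) (req : V → EReal) : Prop :=
  ∀ π ∈ Ps, req π ≠ ⊤ → ∃ f ∈ R, ((dist π f : ℝ) : EReal) ≤ req π

/-!
Feasibility: by (C1) a finite parent request at `π` is routed to a child portal `ρ` whose own
request, and hence (triangle inequality) the request at `π`, is met by a facility that the child
opened. Cost: every way a client connects in its child instance is still available in the parent.
Facilities are kept, and a child portal `ρ` with finite prediction is, by (C2), either dominated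
by a parent portal or lies near a child portal whose request is met by an opened facility, which
then serves the client at most as expensively as `ρ` did. Summing over the partition of the
clients, and using that opening costs are nonnegative so that shared facilities are not paid
twice, gives the bound.
-/

@[simp, norm_cast]
theorem EReal.coe_finset_sum {ι : Type*} (s : Finset ι) (f : ι → ℝ) :
    ((∑ i ∈ s, f i : ℝ) : EReal) = ∑ i ∈ s, (f i : EReal) :=
  map_sum (⟨⟨(↑), EReal.coe_zero⟩, EReal.coe_add⟩ : ℝ →+ EReal) f s

theorem Finset.sum_biUnion_le_sum_sum {ι α M : Type*} [DecidableEq α] [AddCommMonoid M]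
    [PartialOrder M] [IsOrderedAddMonoid M] (s : Finset ι) (t : ι → Finset α) {f : α → M}
    (hf : ∀ x, 0 ≤ f x) :
    ∑ x ∈ s.biUnion t, f x ≤ ∑ i ∈ s, ∑ x ∈ t i, f x := by
  have himage : (s.sigma t).image Sigma.snd = s.biUnion t := by ext; simp
  calc ∑ x ∈ s.biUnion t, f x
      ≤ ∑ x ∈ s.sigma t, f x.2 := himage ▸ sum_image_le_of_nonneg fun x _ => hf x
    _ = ∑ i ∈ s, ∑ x ∈ t i, f x := sum_sigma s t fun x => f x.2

theorem EReal.ne_top_of_add_coe_le {a b : EReal} {r : ℝ} (h : a + r ≤ b) (hb : b ≠ ⊤) :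
    a ≠ ⊤ := by
  rintro rfl
  rw [EReal.top_add_coe] at h
  exact hb (top_le_iff.1 h)

section

variable {V : Type*} [MetricSpace V]

theorem coe_dist_le_of_le_add {x y z : V} {a b : EReal} (hyz : (dist y z : EReal) ≤ a)
    (hab : a + dist x y ≤ b) : (dist x z : EReal) ≤ b :=
  calc (dist x z : EReal) ≤ ((dist y z + dist x y : ℝ) : EReal) :=
        EReal.coe_le_coe_iff.2 (by linarith [dist_triangle x y z])
    _ = (dist y z : EReal) + dist x y := EReal.coe_add _ _
    _ ≤ a + dist x y := by gcongr
    _ ≤ b := hab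

theorem feasibleE.exists_dist_le {R Ps : Finset V} {req : V → EReal} (h : feasibleE R Ps req)
    {ρ x : V} {b : EReal} (hρ : ρ ∈ Ps) (hle : req ρ + dist x ρ ≤ b) (hb : b ≠ ⊤) :
    ∃ f ∈ R, (dist x f : EReal) ≤ b := by
  obtain ⟨f, hf, hdf⟩ := h ρ hρ (EReal.ne_top_of_add_coe_le hle hb)
  exact ⟨f, hf, coe_dist_le_of_le_add hdf hle⟩

theorem costE_biUnion_le {ι : Type*} [DecidableEq V] {op : V → ℝ} (hop : ∀ f, 0 ≤ op f)
    (s : Finset ι) (C R Ps : ι → Finset V) (pred : ι → V → EReal) (Ps₀ : Finset V)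
    (pred₀ : V → EReal)
    (hC : (s : Set ι).PairwiseDisjoint C)
    (hconn : ∀ i ∈ s, ∀ c ∈ C i,
      connE (s.biUnion R) Ps₀ pred₀ c ≤ connE (R i) (Ps i) (pred i) c) :
    costE op (s.biUnion C) (s.biUnion R) Ps₀ pred₀
      ≤ ∑ i ∈ s, costE op (C i) (R i) (Ps i) (pred i) := by
  have hopen : ((∑ f ∈ s.biUnion R, op f : ℝ) : EReal)
      ≤ ∑ i ∈ s, ((∑ f ∈ R i, op f : ℝ) : EReal) := by
    rw [← EReal.coe_finset_sum]
    exact EReal.coe_le_coe_iff.2 (sum_biUnion_le_sum_sum s R hop)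
  have hclients : ∑ c ∈ s.biUnion C, connE (s.biUnion R) Ps₀ pred₀ c
      ≤ ∑ i ∈ s, ∑ c ∈ C i, connE (R i) (Ps i) (pred i) c := by
    rw [sum_biUnion hC]
    exact sum_le_sum fun i hi => sum_le_sum (hconn i hi)
  simpa only [costE, sum_add_distrib] using add_le_add hopen hclients

variable {R Ps : Finset V} {pred : V → EReal} {c : V}

theorem connE_le_dist {f : V} (hf : f ∈ R) : connE R Ps pred c ≤ dist c f :=
  sInf_le (Or.inl ⟨f, hf, rfl⟩)

theorem connE_le_dist_add {π : V} (hπ : π ∈ Ps) : connE R Ps pred c ≤ dist c π + pred π :=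
  sInf_le (Or.inr ⟨π, hπ, rfl⟩)

theorem le_connE {a : EReal} (hR : ∀ f ∈ R, a ≤ dist c f)
    (hPs : ∀ π ∈ Ps, a ≤ dist c π + pred π) : a ≤ connE R Ps pred c := by
  refine le_sInf ?_
  rintro _ (⟨f, hf, rfl⟩ | ⟨π, hπ, rfl⟩)
  exacts [hR f hf, hPs π hπ]

theorem connE_le_connE {R' Ps' : Finset V} {pred' : V → EReal} (hR : R' ⊆ R)
    (hPs : ∀ ρ ∈ Ps', pred' ρ ≠ ⊤ →
      (∃ π ∈ Ps, pred π + dist π ρ ≤ pred' ρ) ∨ ∃ f ∈ R, (dist ρ f : EReal) ≤ pred' ρ)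
    (c : V) : connE R Ps pred c ≤ connE R' Ps' pred' c := by
  refine le_connE (fun f hf => connE_le_dist (hR hf)) fun ρ hρ => ?_
  by_cases htop : pred' ρ = ⊤
  · rw [htop, EReal.coe_add_top]
    exact le_top
  rcases hPs ρ hρ htop with ⟨π, hπ, hle⟩ | ⟨f, hf, hle⟩
  · calc connE R Ps pred c ≤ dist c π + pred π := connE_le_dist_add hπ
      _ ≤ (dist c ρ + dist π ρ : ℝ) + pred π := by
          gcongr
          exact (dist_triangle c ρ π).trans_eq (by rw [dist_comm ρ π])
      _ = dist c ρ + (pred π + dist π ρ) := by rw [EReal.coe_add, add_assoc, add_comm (pred π)]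
      _ ≤ dist c ρ + pred' ρ := by gcongr
  · exact (connE_le_dist hf).trans (coe_dist_le_of_le_add hle (add_comm _ _).le)

end

theorem combine_solutions_general
    {V ι : Type*} [MetricSpace V] [Fintype ι] [DecidableEq V]
    (op : V → ℝ) (hop : ∀ f, 0 ≤ op f)
    (C0 P0 : Finset V) (pred req : V → EReal)
    (Cc Pc Rc : ι → Finset V) (predc reqc : ι → V → EReal)
    (hpart : C0 = Finset.univ.biUnion Cc)
    (hdisj : ∀ t t' : ι, t ≠ t' → Disjoint (Cc t) (Cc t'))
    (hC1 : ∀ π ∈ P0, req π ≠ ⊤ →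
      ∃ t : ι, ∃ ρ ∈ Pc t, reqc t ρ + ((dist π ρ : ℝ) : EReal) ≤ req π)
    (hC2 : ∀ t : ι, ∀ ρ ∈ Pc t, predc t ρ ≠ ⊤ →
      (∃ π ∈ P0, pred π + ((dist π ρ : ℝ) : EReal) ≤ predc t ρ) ∨
      (∃ t'' : ι, ∃ ρ' ∈ Pc t'', reqc t'' ρ' + ((dist ρ' ρ : ℝ) : EReal) ≤ predc t ρ))
    (hfeas : ∀ t, feasibleE (Rc t) (Pc t) (reqc t)) :
    feasibleE (Finset.univ.biUnion Rc) P0 req ∧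
    costE op C0 (Finset.univ.biUnion Rc) P0 pred
      ≤ ∑ t : ι, costE op (Cc t) (Rc t) (Pc t) (predc t) := by
  have hR : ∀ t, Rc t ⊆ univ.biUnion Rc := fun t => subset_biUnion_of_mem Rc (mem_univ t)
  refine ⟨fun π hπ hne => ?_, ?_⟩
  · obtain ⟨t, ρ, hρ, hle⟩ := hC1 π hπ hne
    obtain ⟨f, hf, hdf⟩ := (hfeas t).exists_dist_le hρ hle hne
    exact ⟨f, hR t hf, hdf⟩
  subst hpart
  refine costE_biUnion_le hop univ Cc Rc Pc predc P0 pred (fun t _ t' _ => hdisj t t')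
    fun t _ c _ => connE_le_connE (hR t) (fun ρ hρ hne => ?_) c
  refine (hC2 t ρ hρ hne).imp id fun ⟨t'', ρ', hρ', hle⟩ => ?_
  rw [dist_comm] at hle
  obtain ⟨f, hf, hdf⟩ := (hfeas t'').exists_dist_le hρ' hle hne
  exact ⟨f, hR t'' hf, hdf⟩

/-- Lemma (combine): given compatible request/prediction functions for a parent instance and
its children, the union of feasible child solutions is a feasible parent solution whose cost
is at most the sum of the child costs. -/
theorem combine_solutions
    {V ι : Type*} [MetricSpace V] [Fintype ι] [DecidableEq V]
    (op : V → ℝ) (hop : ∀ f, 0 ≤ op f)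
    (C0 P0 : Finset V) (pred req : V → EReal)
    (Cc Pc Rc : ι → Finset V) (predc reqc : ι → V → EReal)
    (hpredfin : ∀ π, pred π ≠ ⊥) (hreqfin : ∀ π, req π ≠ ⊥)
    (hpredcfin : ∀ t π, predc t π ≠ ⊥) (hreqcfin : ∀ t π, reqc t π ≠ ⊥)
    (hpart : C0 = Finset.univ.biUnion Cc)
    (hdisj : ∀ t t' : ι, t ≠ t' → Disjoint (Cc t) (Cc t'))
    (hC1 : ∀ π ∈ P0, req π ≠ ⊤ →
      ∃ t : ι, ∃ ρ ∈ Pc t, reqc t ρ + ((dist π ρ : ℝ) : EReal) ≤ req π)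
    (hC2 : ∀ t : ι, ∀ ρ ∈ Pc t, predc t ρ ≠ ⊤ →
      (∃ π ∈ P0, pred π + ((dist π ρ : ℝ) : EReal) ≤ predc t ρ) ∨
      (∃ t'' : ι, ∃ ρ' ∈ Pc t'', reqc t'' ρ' + ((dist ρ' ρ : ℝ) : EReal) ≤ predc t ρ))
    (hfeas : ∀ t, feasibleE (Rc t) (Pc t) (reqc t)) :
    feasibleE (Finset.univ.biUnion Rc) P0 req ∧
    costE op C0 (Finset.univ.biUnion Rc) P0 pred
      ≤ ∑ t : ι, costE op (Cc t) (Rc t) (Pc t) (predc t) :=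
  combine_solutions_general op hop C0 P0 pred req Cc Pc Rc predc reqc hpart hdisj hC1 hC2 hfeas
end

section
/- Let (V, dist) be a finite metric space with clients C, facilities F, opening costs open, and let D̃ ⊆ F be a solution whose clusters (cluster(f))_{f∈D̃} partition C with each cluster nonempty. For f ∈ D̃ define avgcost(f) = (open(f) + Σ_{c∈cluster(f)} dist(c,f))/|cluster(f)|, Far(f) = {c ∈ cluster(f) : dist(c,f) > ε^{-2}·avgcost(f)}, and Close(f) = {c ∈ cluster(f) : dist(c,f) < ε^2·avgcost(f)}, where 0 < ε < 1. Suppose each client of Far(f) ∪ Close(f) is moved to a point x(f) with dist(f, x(f)) = ε^2·avgcost(f), yielding modified clusters cluster'(f). Then for every f ∈ D̃, open(f) + Σ_{c∈cluster'(f)} dist(c,f) ≤ (1+ε^2)·|cluster(f)|·avgcost(f). -/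
open Finset Metric

/-- Average cost of a cluster. -/
noncomputable def avgcost {V : Type*} [MetricSpace V]
    (op : V → ℝ) (cl : V → Finset V) (f : V) : ℝ :=
  (op f + ∑ c ∈ cl f, dist c f) / ((cl f).card : ℝ)

/-- Far clients of a cluster: those with `dist(c,f) > ε⁻²·avgcost(f)`. -/
noncomputable def farSet {V : Type*} [MetricSpace V]
    (op : V → ℝ) (cl : V → Finset V) (ε : ℝ) (f : V) : Finset V :=
  (cl f).filter fun c => (ε ^ 2)⁻¹ * avgcost op cl f < dist c f

/-- Close clients of a cluster: those with `dist(c,f) < ε²·avgcost(f)`. -/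
noncomputable def closeSet {V : Type*} [MetricSpace V]
    (op : V → ℝ) (cl : V → Finset V) (ε : ℝ) (f : V) : Finset V :=
  (cl f).filter fun c => dist c f < ε ^ 2 * avgcost op cl f

/-! A relocated client costs `dist (x f) f = ε²·avgcost(f)`, which is nonnegative because opening
costs are. Hence the new cost is at most the old one, `op f + ∑ dist = |cluster(f)|·avgcost(f)`,
plus `ε²·avgcost(f)` for every client of the cluster, i.e. `(1 + ε²)·|cluster(f)|·avgcost(f)`. -/

theorem Finset.sum_sdiff_add_card_nsmul_le {ι M : Type*} [DecidableEq ι]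
    [AddCommMonoid M] [PartialOrder M] [IsOrderedAddMonoid M]
    {s t : Finset ι} (hst : s ⊆ t) {g : ι → M} (hg : ∀ i ∈ t, 0 ≤ g i) {a : M} (ha : 0 ≤ a) :
    ∑ i ∈ t \ s, g i + #s • a ≤ ∑ i ∈ t, g i + #t • a :=
  add_le_add (sum_le_sum_of_subset_of_nonneg sdiff_subset fun i hi _ => hg i hi)
    (nsmul_le_nsmul_left ha (card_le_card hst))

section avgcost

variable {V : Type*} [MetricSpace V] {op : V → ℝ} {cl : V → Finset V} {f : V}

theorem avgcost_nonneg (hop : 0 ≤ op f) : 0 ≤ avgcost op cl f :=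
  div_nonneg (add_nonneg hop (sum_nonneg fun _ _ => dist_nonneg)) (Nat.cast_nonneg _)

theorem card_mul_avgcost (hcl : (cl f).Nonempty) :
    (#(cl f) : ℝ) * avgcost op cl f = op f + ∑ c ∈ cl f, dist c f :=
  mul_div_cancel₀ _ (Nat.cast_ne_zero.mpr hcl.card_pos.ne')

theorem farSet_union_closeSet_subset [DecidableEq V] (ε : ℝ) :
    farSet op cl ε f ∪ closeSet op cl ε f ⊆ cl f :=
  union_subset (filter_subset _ _) (filter_subset _ _)

end avgcost

theorem concentrated_cluster_cost_general
    {V : Type*} [MetricSpace V] [DecidableEq V]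
    (Dt : Finset V) (op : V → ℝ) (hop : ∀ f, 0 ≤ op f)
    (ε : ℝ)
    (cl : V → Finset V)
    (hclne : ∀ f ∈ Dt, (cl f).Nonempty)
    (x : V → V)
    (hx : ∀ f ∈ Dt, dist f (x f) = ε ^ 2 * avgcost op cl f) :
    ∀ f ∈ Dt,
      op f
        + (∑ c ∈ (cl f) \ (farSet op cl ε f ∪ closeSet op cl ε f), dist c f)
        + (((farSet op cl ε f ∪ closeSet op cl ε f).card : ℝ) * dist (x f) f)
      ≤ (1 + ε ^ 2) * ((cl f).card : ℝ) * avgcost op cl f := by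
  intro f hf
  set S := farSet op cl ε f ∪ closeSet op cl ε f
  have hmove : 0 ≤ ε ^ 2 * avgcost op cl f := by
    have := avgcost_nonneg (cl := cl) (hop f); positivity
  calc op f + ∑ c ∈ cl f \ S, dist c f + (#S : ℝ) * dist (x f) f
      = op f + (∑ c ∈ cl f \ S, dist c f + #S • (ε ^ 2 * avgcost op cl f)) := by
        rw [dist_comm, hx f hf, nsmul_eq_mul, add_assoc]
    _ ≤ op f + (∑ c ∈ cl f, dist c f + #(cl f) • (ε ^ 2 * avgcost op cl f)) := by
        gcongr op f + ?_
        exact sum_sdiff_add_card_nsmul_le (farSet_union_closeSet_subset ε)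
          (fun _ _ => dist_nonneg) hmove
    _ = (1 + ε ^ 2) * (#(cl f) : ℝ) * avgcost op cl f := by
        rw [nsmul_eq_mul, ← add_assoc, ← card_mul_avgcost (op := op) (hclne f hf)]
        ring

/-- Lemma (`scSol-Ip`, per-cluster bound): after moving all far and close clients of a
cluster to a point `x f` at distance exactly `ε²·avgcost(f)` from `f`, the opening plus
connection-to-`f` cost of the modified cluster is at most `(1+ε²)·|cluster(f)|·avgcost(f)`. -/
theorem concentrated_cluster_cost
    {V : Type*} [MetricSpace V] [DecidableEq V]
    (C F Dt : Finset V) (op : V → ℝ) (hop : ∀ f, 0 ≤ op f)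
    (hDtF : Dt ⊆ F)
    (ε : ℝ) (hε0 : 0 < ε) (hε1 : ε < 1)
    (cl : V → Finset V)
    (hclC : ∀ f ∈ Dt, cl f ⊆ C) (hclne : ∀ f ∈ Dt, (cl f).Nonempty)
    (hpart : ∀ c ∈ C, ∃! f, f ∈ Dt ∧ c ∈ cl f)
    (x : V → V)
    (hx : ∀ f ∈ Dt, dist f (x f) = ε ^ 2 * avgcost op cl f) :
    ∀ f ∈ Dt,
      op f
        + (∑ c ∈ (cl f) \ (farSet op cl ε f ∪ closeSet op cl ε f), dist c f)
        + (((farSet op cl ε f ∪ closeSet op cl ε f).card : ℝ) * dist (x f) f)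
      ≤ (1 + ε ^ 2) * ((cl f).card : ℝ) * avgcost op cl f :=
  concentrated_cluster_cost_general Dt op hop ε cl hclne x hx
end
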